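/- Let G be a metabelian group with an abelian normal subgroup S such that G/S is finite, S is finitely generated, and the subgroup ⟨[G,S]⟩ is infinite. Then G is not an Engel group: there exist x ∈ G and g ∈ G such that [x, g, …, g] ≠ 1 (with n copies of g) for all n. -/

import Mathlib

private lemma aux1 {R : Type*} [Ring R] (ψ : R) (k : ℕ) :
    ∃ A : R, Commute ψ A ∧ (1 + ψ) ^ k = 1 + (k : R) * ψ + ψ ^ 2 * A := by
  induction k with
  | zero => exact ⟨0, Commute.zero_right ψ, by simp⟩
  | succ k ih =>
    obtain ⟨A, hA, hk⟩ := ih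
    refine ⟨(k : R) + A + A * ψ, ?_, ?_⟩
    · exact ((Nat.cast_commute k ψ).symm.add_right hA).add_right (hA.mul_right (Commute.refl ψ))
    · rw [pow_succ, hk]
      push_cast
      have hc : ψ * (k : R) = (k : R) * ψ := (Nat.cast_commute k ψ).symm.eq
      noncomm_ring
      rw [hc, ← mul_assoc ψ (k:R) ψ, hc, mul_assoc]; abel

private lemma aux2 {R : Type*} [Ring R] (ψ : R) (k N : ℕ) (h1 : (1 + ψ) ^ k = 1)
    (h2 : ψ ^ (N + 1) = 0) : (k : R) ^ N * ψ = 0 := by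
  obtain ⟨A, hA, hk⟩ := aux1 ψ k
  have hkψ : (k : R) * ψ = ψ ^ 2 * -A := by
    have h3 : (k : R) * ψ + ψ ^ 2 * A = 0 := by
      have := hk.symm.trans h1
      have h4 : (1 : R) + ((k : R) * ψ + ψ ^ 2 * A) = 1 + 0 := by rw [add_zero, ← add_assoc]; exact this
      exact add_left_cancel h4
    rw [mul_neg]
    exact eq_neg_of_add_eq_zero_left h3
  have main : ∀ m : ℕ, ∃ B : R, Commute ψ B ∧ (k : R) ^ m * ψ = ψ ^ (m + 1) * B := by
    intro m
    induction m with
    | zero => exact ⟨1, Commute.one_right ψ, by simp⟩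
    | succ m ih =>
      obtain ⟨B, hB, hmB⟩ := ih
      refine ⟨B * -A, hB.mul_right hA.neg_right, ?_⟩
      calc (k : R) ^ (m + 1) * ψ = (k : R) ^ m * ((k : R) * ψ) := by
            rw [pow_succ, mul_assoc]
        _ = (k : R) ^ m * (ψ * (ψ * -A)) := by rw [hkψ, sq, mul_assoc]
        _ = ((k : R) ^ m * ψ) * (ψ * -A) := by rw [mul_assoc]
        _ = ψ ^ (m + 1) * B * (ψ * -A) := by rw [hmB]
        _ = ψ ^ (m + 1) * (B * ψ) * -A := by rw [mul_assoc, mul_assoc, mul_assoc]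
        _ = ψ ^ (m + 1) * (ψ * B) * -A := by rw [hB.eq]
        _ = ψ ^ (m + 1 + 1) * (B * -A) := by simp only [pow_succ, mul_assoc]
  obtain ⟨B, _, hmB⟩ := main N
  rw [hmB, h2, zero_mul]

/-- Iterated commutator `[x, g, ..., g]` (with `n` copies of `g`), where
`[x,g] = x⁻¹g⁻¹xg`, `engel x g 0 = x`. -/
def engel {G : Type*} [Group G] (x g : G) : ℕ → G
  | 0 => x
  | n + 1 => (engel x g n)⁻¹ * g⁻¹ * engel x g n * g

private lemma stmt8_aux {G : Type*} [Group G]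
    (S : Subgroup G) (hS : S.Normal)
    (hab : ∀ a ∈ S, ∀ b ∈ S, a * b = b * a)
    (hfg : S.FG) (hfin : Finite (G ⧸ S))
    (hinf : ¬ (Subgroup.closure {x : G | ∃ g : G, ∃ s ∈ S, x = g⁻¹ * s⁻¹ * g * s} :
      Set G).Finite)
    (hcon : ∀ x g : G, ∃ n, 1 ≤ n ∧ engel x g n = 1) : False := by
  apply hinf
  letI : CommGroup ↥S :=
    { (inferInstance : Group ↥S) with
      mul_comm := fun a b => Subtype.ext (hab a a.2 b b.2) }
  haveI hSFG : Group.FG ↥S := (Group.fg_iff_subgroup_fg S).mpr hfg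
  haveI : AddGroup.FG (Additive ↥S) := GroupFG.iff_add_fg.mp hSFG
  haveI : Module.Finite ℤ (Additive ↥S) := Module.Finite.iff_addGroup_fg.mpr inferInstance
  set T : Subgroup ↥S := CommGroup.torsion ↥S with hTdef
  haveI hTFG : Group.FG ↥T := by
    rw [Group.fg_iff_subgroup_fg]
    have h1 : (AddSubgroup.toIntSubmodule T.toAddSubgroup).FG := IsNoetherian.noetherian _
    rw [Submodule.fg_iff_addSubgroup_fg, AddSubgroup.toIntSubmodule_toAddSubgroup] at h1
    exact (Subgroup.fg_iff_add_fg T).mpr h1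
  haveI hTfin : Finite ↥T := CommGroup.finite_of_fg_torsion ↥T
    (fun t => (Submonoid.isOfFinOrder_coe (H := T.toSubmonoid) (x := t)).mp t.2)
  have key : {x : G | ∃ g : G, ∃ s ∈ S, x = g⁻¹ * s⁻¹ * g * s} ⊆
      ((T.map S.subtype : Subgroup G) : Set G) := by
    rintro c ⟨g, s, hs, rfl⟩
    have hconj : ∀ x : G, x ∈ S → g⁻¹ * x * g ∈ S := fun x hx => by
      simpa [mul_assoc] using hS.conj_mem x hx g⁻¹
    set φ : ↥S →* ↥S :=
      { toFun := fun x => ⟨g⁻¹ * ↑x * g, hconj _ x.2⟩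
        map_one' := by ext; simp
        map_mul' := fun x y => by
          ext
          show g⁻¹ * (↑x * ↑y) * g = (g⁻¹ * ↑x * g) * (g⁻¹ * ↑y * g)
          group } with hφdef
    set Φ : AddMonoid.End (Additive ↥S) := (MonoidHom.toAdditive φ : AddMonoid.End (Additive ↥S))
      with hΦdef
    set ψ : AddMonoid.End (Additive ↥S) := Φ - 1 with hψdef
    have hψapp : ∀ a : Additive ↥S,
        Additive.toMul (ψ a) = φ (Additive.toMul a) * (Additive.toMul a)⁻¹ := by
      intro a
      show Additive.toMul ((Φ - 1) a) = _
      rw [show (Φ - 1) a = Φ a - a from rfl, toMul_sub, div_eq_mul_inv]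
      rfl
    have heng : ∀ (n : ℕ) (x : ↥S),
        engel (↑x : G) g n = ((Additive.toMul ((ψ ^ n) (Additive.ofMul x)) : ↥S) : G) := by
      intro n
      induction n with
      | zero => intro x; rfl
      | succ n ih =>
        intro x
        have hstep : (ψ ^ (n + 1)) (Additive.ofMul x) = ψ ((ψ ^ n) (Additive.ofMul x)) := by
          rw [pow_succ']; rfl
        set Y : ↥S := Additive.toMul ((ψ ^ n) (Additive.ofMul x)) with hY
        have hc : ((Y : G))⁻¹ * (g⁻¹ * ↑Y * g) = (g⁻¹ * ↑Y * g) * (↑Y)⁻¹ :=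
          hab _ (S.inv_mem Y.2) _ (hconj _ Y.2)
        show (engel (↑x : G) g n)⁻¹ * g⁻¹ * engel (↑x : G) g n * g = _
        rw [ih x, hstep]
        have h2 : (Additive.toMul (ψ ((ψ ^ n) (Additive.ofMul x))) : ↥S) = φ Y * Y⁻¹ :=
          hψapp _
        rw [h2]
        calc ((Y : G))⁻¹ * g⁻¹ * ↑Y * g = (↑Y)⁻¹ * (g⁻¹ * ↑Y * g) := by group
          _ = (g⁻¹ * ↑Y * g) * (↑Y)⁻¹ := hc
          _ = ((φ Y * Y⁻¹ : ↥S) : G) := by push_cast; rfl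
    have hpow : ∀ (n : ℕ) (x : ↥S),
        ((Additive.toMul ((Φ ^ n) (Additive.ofMul x)) : ↥S) : G) = (g ^ n)⁻¹ * ↑x * g ^ n := by
      intro n
      induction n with
      | zero => intro x; simp
      | succ n ih =>
        intro x
        have hstep : (Φ ^ (n + 1)) (Additive.ofMul x) = (Φ ^ n) (Additive.ofMul (φ x)) := by
          rw [pow_succ]; rfl
        rw [hstep, ih (φ x)]
        show (g ^ n)⁻¹ * (g⁻¹ * ↑x * g) * g ^ n = (g ^ (n + 1))⁻¹ * ↑x * g ^ (n + 1)
        rw [pow_succ', mul_inv_rev]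
        simp [mul_assoc]
    have hk0 : S.index ≠ 0 := Subgroup.index_ne_zero_of_finite
    have hΦk : Φ ^ S.index = 1 := by
      apply DFunLike.ext
      intro a
      have h1 := hpow S.index (Additive.toMul a)
      have h2 : (g ^ S.index)⁻¹ * ↑(Additive.toMul a) * g ^ S.index = ↑(Additive.toMul a) := by
        rw [mul_assoc, hab _ (Additive.toMul a).2 _ (Subgroup.pow_index_mem S g)]
        group
      apply Additive.toMul.injective
      exact Subtype.ext (h1.trans h2)
    have h1ψ : (1 + ψ) ^ S.index = 1 := by
      have : (1 : AddMonoid.End (Additive ↥S)) + ψ = Φ := by rw [hψdef]; abel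
      rw [this]; exact hΦk
    obtain ⟨F, hF⟩ := hSFG.out
    choose nf hnf1 hnf2 using fun t : ↥S => hcon (↑t) g
    set N := F.sup nf with hN
    have hgen : ∀ t ∈ F, (ψ ^ N) (Additive.ofMul t) = 0 := by
      intro t ht
      have h0 : (ψ ^ nf t) (Additive.ofMul t) = 0 := by
        have h1 := hnf2 t
        rw [heng (nf t) t] at h1
        have h2 : (Additive.toMul ((ψ ^ nf t) (Additive.ofMul t)) : ↥S) = 1 := by
          exact_mod_cast h1
        rwa [toMul_eq_one] at h2
      have hle : nf t ≤ N := Finset.le_sup ht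
      rw [← pow_sub_mul_pow ψ hle]
      show (ψ ^ (N - nf t)) ((ψ ^ nf t) (Additive.ofMul t)) = 0
      rw [h0]
      exact map_zero _
    set K : Subgroup ↥S :=
      { carrier := {x : ↥S | (ψ ^ N) (Additive.ofMul x) = 0}
        one_mem' := by
          show (ψ ^ N) (Additive.ofMul 1) = 0
          rw [ofMul_one]; exact map_zero _
        mul_mem' := by
          intro a b ha hb
          show (ψ ^ N) (Additive.ofMul (a * b)) = 0
          rw [ofMul_mul, map_add, ha, hb, add_zero]
        inv_mem' := by
          intro a ha
          show (ψ ^ N) (Additive.ofMul a⁻¹) = 0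
          rw [ofMul_inv, map_neg, ha, neg_zero] } with hKdef
    have hKtop : ∀ x : ↥S, (ψ ^ N) (Additive.ofMul x) = 0 := by
      intro x
      have hle : Subgroup.closure (↑F : Set ↥S) ≤ K :=
        (Subgroup.closure_le K).mpr fun t ht => hgen t ht
      rw [hF] at hle
      exact hle (Subgroup.mem_top x)
    have hψN : ψ ^ (N + 1) = 0 := by
      apply DFunLike.ext
      intro a
      rw [pow_succ]
      show (ψ ^ N) (ψ a) = 0
      exact hKtop (Additive.toMul (ψ a))
    have hzero : ((S.index : AddMonoid.End (Additive ↥S)) ^ N * ψ) = 0 :=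
      aux2 ψ S.index N h1ψ hψN
    set s' : ↥S := (⟨s, hs⟩ : ↥S) with hs'
    rw [SetLike.mem_coe, Subgroup.mem_map]
    refine ⟨Additive.toMul (ψ (Additive.ofMul s'⁻¹)), ?_, ?_⟩
    · show IsOfFinOrder _
      refine isOfFinOrder_iff_pow_eq_one.mpr
        ⟨S.index ^ N, pow_pos (Nat.pos_of_ne_zero hk0) N, ?_⟩
      have h3 : ((S.index : AddMonoid.End (Additive ↥S)) ^ N) (ψ (Additive.ofMul s'⁻¹)) = 0 := by
        show (((S.index : AddMonoid.End (Additive ↥S)) ^ N) * ψ) (Additive.ofMul s'⁻¹) = 0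
        rw [hzero]
        rfl
      rw [← Nat.cast_pow, AddMonoid.End.natCast_apply] at h3
      have h4 := congrArg Additive.toMul h3
      rwa [toMul_nsmul, toMul_zero] at h4
    · show ((Additive.toMul (ψ (Additive.ofMul s'⁻¹)) : ↥S) : G) = g⁻¹ * s⁻¹ * g * s
      rw [hψapp]
      show ((φ s'⁻¹ * (s'⁻¹)⁻¹ : ↥S) : G) = g⁻¹ * s⁻¹ * g * s
      rw [inv_inv]
      push_cast
      show (g⁻¹ * ↑(s'⁻¹) * g) * s = g⁻¹ * s⁻¹ * g * s
      push_cast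
      simp [mul_assoc]
      rfl
  have hfin2 : ((T.map S.subtype : Subgroup G) : Set G).Finite := by
    rw [Subgroup.coe_map]
    exact Set.Finite.image _ (Set.toFinite (T : Set ↥S))
  exact hfin2.subset ((Subgroup.closure_le _).mpr key)

theorem stmt_8 {G : Type*} [Group G]
    (hmeta : ∀ a ∈ commutator G, ∀ b ∈ commutator G, a * b = b * a)
    (S : Subgroup G) (hS : S.Normal)
    (hab : ∀ a ∈ S, ∀ b ∈ S, a * b = b * a)
    (hfg : S.FG) (hfin : Finite (G ⧸ S))
    (hinf : ¬ (Subgroup.closure {x : G | ∃ g : G, ∃ s ∈ S, x = g⁻¹ * s⁻¹ * g * s} :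
      Set G).Finite) :
    ∃ x g : G, ∀ n, 1 ≤ n → engel x g n ≠ 1 := by
  by_contra h
  push_neg at h
  exact stmt8_aux S hS hab hfg hfin hinf (fun x g => by
    obtain ⟨n, hn1, hn2⟩ := h x g
    exact ⟨n, hn1, hn2⟩)
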